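/- Let k ≥ 2, n ≥ k+1, let D be a directed (k−1)-tree on n vertices, let S be a minimum separator of D, and let B₁,…,B_t be the strong components of D − S. Then each B_i contains a vertex whose reciprocal-degree in D is exactly k−1. -/

import Mathlib

/-- A finite strict digraph: a finite vertex set and a finite set of arcs
(ordered pairs), with no loops, and all arc endpoints in the vertex set. -/
structure Dgraph where
  verts : Finset ℕ
  arcs : Finset (ℕ × ℕ)
  arcs_mem : ∀ e ∈ arcs, e.1 ∈ verts ∧ e.2 ∈ verts
  no_loops : ∀ e ∈ arcs, e.1 ≠ e.2

namespace Dgraph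

/-- `H` is a subdigraph of `D`. -/
def IsSubdigraph (H D : Dgraph) : Prop := H.verts ⊆ D.verts ∧ H.arcs ⊆ D.arcs

/-- Reachability by a directed path. -/
def Reach (D : Dgraph) (u v : ℕ) : Prop :=
  Relation.ReflTransGen (fun a b => (a, b) ∈ D.arcs) u v

/-- `D` is strongly connected. -/
def StronglyConnected (D : Dgraph) : Prop :=
  ∀ u ∈ D.verts, ∀ v ∈ D.verts, D.Reach u v

/-- Deletion of a set of vertices. -/
def delete (D : Dgraph) (S : Finset ℕ) : Dgraph where
  verts := D.verts \ S
  arcs := D.arcs.filter (fun e => e.1 ∉ S ∧ e.2 ∉ S)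
  arcs_mem := by
    intro e he
    simp only [Finset.mem_filter] at he
    have h := D.arcs_mem e he.1
    simp only [Finset.mem_sdiff]
    exact ⟨⟨h.1, he.2.1⟩, ⟨h.2, he.2.2⟩⟩
  no_loops := fun e he => D.no_loops e (Finset.mem_filter.mp he).1

/-- The subdigraph induced by a set of vertices. -/
def induce (D : Dgraph) (S : Finset ℕ) : Dgraph where
  verts := D.verts ∩ S
  arcs := D.arcs.filter (fun e => e.1 ∈ S ∧ e.2 ∈ S)
  arcs_mem := by
    intro e he
    simp only [Finset.mem_filter] at he
    have h := D.arcs_mem e he.1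
    simp only [Finset.mem_inter]
    exact ⟨⟨h.1, he.2.1⟩, ⟨h.2, he.2.2⟩⟩
  no_loops := fun e he => D.no_loops e (Finset.mem_filter.mp he).1

/-- The complete digraph on a vertex set `S`. -/
def completeOn (S : Finset ℕ) : Dgraph where
  verts := S
  arcs := (S ×ˢ S).filter (fun e => e.1 ≠ e.2)
  arcs_mem := by
    intro e he
    simp only [Finset.mem_filter, Finset.mem_product] at he
    exact ⟨he.1.1, he.1.2⟩
  no_loops := fun e he => (Finset.mem_filter.mp he).2

/-- Adding the arc `(u, v)` (when this is a legal new arc). -/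
def addArc (D : Dgraph) (u v : ℕ) : Dgraph where
  verts := D.verts
  arcs := if u ∈ D.verts ∧ v ∈ D.verts ∧ u ≠ v then insert (u, v) D.arcs else D.arcs
  arcs_mem := by
    intro e he
    split at he
    · rcases Finset.mem_insert.mp he with h | h
      · subst h; exact ⟨by tauto, by tauto⟩
      · exact D.arcs_mem e h
    · exact D.arcs_mem e he
  no_loops := by
    intro e he
    split at he
    · rcases Finset.mem_insert.mp he with h | h
      · subst h; tauto
      · exact D.no_loops e h
    · exact D.no_loops e he

/-- `D` is `k`-strongly connected: it has at least `k+1` vertices and removing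
any fewer than `k` vertices leaves a strongly connected digraph. -/
def KStrong (D : Dgraph) (k : ℕ) : Prop :=
  k + 1 ≤ D.verts.card ∧
    ∀ S : Finset ℕ, S.card < k → StronglyConnected (D.delete S)

/-- `(u, v)` is an arc of the complement of `D`. -/
def MissingArc (D : Dgraph) (u v : ℕ) : Prop :=
  u ∈ D.verts ∧ v ∈ D.verts ∧ u ≠ v ∧ (u, v) ∉ D.arcs

/-- `D` is `𝒟ₖ`-saturated: it has no `k`-strongly connected subdigraph, but
adding any missing arc creates one. -/
def DSaturated (D : Dgraph) (k : ℕ) : Prop :=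
  (∀ H : Dgraph, H.IsSubdigraph D → ¬ H.KStrong k) ∧
    ∀ u v : ℕ, D.MissingArc u v →
      ∃ H : Dgraph, H.IsSubdigraph (D.addArc u v) ∧ H.KStrong k

/-- `S` is a separator of `D`. -/
def IsSeparator (D : Dgraph) (S : Finset ℕ) : Prop :=
  S ⊆ D.verts ∧
    (¬ StronglyConnected (D.delete S) ∨ (D.delete S).verts.card ≤ 1)

/-- `S` is a minimum separator of `D`. -/
def IsMinSeparator (D : Dgraph) (S : Finset ℕ) : Prop :=
  D.IsSeparator S ∧ ∀ T : Finset ℕ, D.IsSeparator T → S.card ≤ T.card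

/-- `B` is the vertex set of a strong component of `D`: a maximal set of
vertices inducing a strongly connected subdigraph. -/
def IsStrongComponent (D : Dgraph) (B : Finset ℕ) : Prop :=
  B ⊆ D.verts ∧ B.Nonempty ∧ StronglyConnected (D.induce B) ∧
    ∀ B' : Finset ℕ, B ⊆ B' → B' ⊆ D.verts →
      StronglyConnected (D.induce B') → B' = B

/-- The reciprocal-degree of `v` in `D`. -/
def recipDeg (D : Dgraph) (v : ℕ) : ℕ :=
  (D.verts.filter (fun w => (v, w) ∈ D.arcs ∧ (w, v) ∈ D.arcs)).card

/-- Extend `D` by a new vertex `v`: bidirectional arcs to every vertex of `K`,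
and unidirectional arcs (all out of `v` if `out`, else all into `v`) to every
other vertex of `D`. -/
def extend (D : Dgraph) (v : ℕ) (K : Finset ℕ) (out : Bool) : Dgraph where
  verts := insert v D.verts
  arcs := D.arcs
    ∪ ((K ∩ D.verts).filter (· ≠ v)).image (fun w => (w, v))
    ∪ ((K ∩ D.verts).filter (· ≠ v)).image (fun w => (v, w))
    ∪ (if out then ((D.verts \ K).filter (· ≠ v)).image (fun w => (v, w))
        else ((D.verts \ K).filter (· ≠ v)).image (fun w => (w, v)))
  arcs_mem := by
    intro e he
    rcases Finset.mem_union.mp he with h | h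
    · rcases Finset.mem_union.mp h with h | h
      · rcases Finset.mem_union.mp h with h | h
        · have h2 := D.arcs_mem e h
          exact ⟨Finset.mem_insert_of_mem h2.1, Finset.mem_insert_of_mem h2.2⟩
        · obtain ⟨w, hw, rfl⟩ := Finset.mem_image.mp h
          have hwD := (Finset.mem_inter.mp (Finset.mem_filter.mp hw).1).2
          exact ⟨Finset.mem_insert_of_mem hwD, Finset.mem_insert_self _ _⟩
      · obtain ⟨w, hw, rfl⟩ := Finset.mem_image.mp h
        have hwD := (Finset.mem_inter.mp (Finset.mem_filter.mp hw).1).2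
        exact ⟨Finset.mem_insert_self _ _, Finset.mem_insert_of_mem hwD⟩
    · cases out with
      | true =>
        simp only [if_true] at h
        obtain ⟨w, hw, rfl⟩ := Finset.mem_image.mp h
        have hwD := (Finset.mem_sdiff.mp (Finset.mem_filter.mp hw).1).1
        exact ⟨Finset.mem_insert_self _ _, Finset.mem_insert_of_mem hwD⟩
      | false =>
        simp only [Bool.false_eq_true, if_false] at h
        obtain ⟨w, hw, rfl⟩ := Finset.mem_image.mp h
        have hwD := (Finset.mem_sdiff.mp (Finset.mem_filter.mp hw).1).1
        exact ⟨Finset.mem_insert_of_mem hwD, Finset.mem_insert_self _ _⟩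
  no_loops := by
    intro e he
    rcases Finset.mem_union.mp he with h | h
    · rcases Finset.mem_union.mp h with h | h
      · rcases Finset.mem_union.mp h with h | h
        · exact D.no_loops e h
        · obtain ⟨w, hw, rfl⟩ := Finset.mem_image.mp h
          exact (Finset.mem_filter.mp hw).2
      · obtain ⟨w, hw, rfl⟩ := Finset.mem_image.mp h
        exact fun hvw => (Finset.mem_filter.mp hw).2 hvw.symm
    · cases out with
      | true =>
        simp only [if_true] at h
        obtain ⟨w, hw, rfl⟩ := Finset.mem_image.mp h
        exact fun hvw => (Finset.mem_filter.mp hw).2 hvw.symm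
      | false =>
        simp only [Bool.false_eq_true, if_false] at h
        obtain ⟨w, hw, rfl⟩ := Finset.mem_image.mp h
        exact (Finset.mem_filter.mp hw).2

/-- The recursively defined family of directed `m`-trees. -/
inductive IsDTree (m : ℕ) : Dgraph → Prop
  | base (S : Finset ℕ) (h : S.card = m) : IsDTree m (completeOn S)
  | grow (D : Dgraph) (hD : IsDTree m D) (v : ℕ) (hv : v ∉ D.verts)
      (K : Finset ℕ) (hK : K ⊆ D.verts) (hKcard : K.card = m)
      (hKcomplete : (completeOn K).IsSubdigraph D) (out : Bool) :
      IsDTree m (D.extend v K out)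

/-- `D` is a tournament: exactly one arc between any two distinct vertices. -/
def IsTournament (D : Dgraph) : Prop :=
  ∀ u ∈ D.verts, ∀ v ∈ D.verts, u ≠ v → ((u, v) ∈ D.arcs ↔ (v, u) ∉ D.arcs)

/-- `D` is acyclic: it has no directed cycle. -/
def Acyclic (D : Dgraph) : Prop :=
  ∀ v : ℕ, ¬ Relation.TransGen (fun a b => (a, b) ∈ D.arcs) v v

end Dgraph

namespace Dgraph

lemma ext' {D E : Dgraph} (hv : D.verts = E.verts) (ha : D.arcs = E.arcs) : D = E := by
  cases D; cases E; simp_all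

lemma reach_mono {H D : Dgraph} (h : H.arcs ⊆ D.arcs) {u v : ℕ} (hr : H.Reach u v) :
    D.Reach u v :=
  Relation.ReflTransGen.mono (fun a b hab => h hab) u v hr

lemma strong_of_card_le_one {D : Dgraph} (h : D.verts.card ≤ 1) : D.StronglyConnected := by
  intro u hu v hv
  have : u = v := Finset.card_le_one.mp h u hu v hv
  exact this ▸ Relation.ReflTransGen.refl

lemma delete_arcs_mono {D E : Dgraph} (h : D.arcs ⊆ E.arcs) (S : Finset ℕ) :
    (D.delete S).arcs ⊆ (E.delete S).arcs := by
  intro e he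
  simp only [delete, Finset.mem_filter] at he ⊢
  exact ⟨h he.1, he.2⟩

lemma induce_arcs_mono (D : Dgraph) {B C : Finset ℕ} (h : B ⊆ C) :
    (D.induce B).arcs ⊆ (D.induce C).arcs := by
  intro e he
  simp only [induce, Finset.mem_filter] at he ⊢
  exact ⟨he.1, h he.2.1, h he.2.2⟩

section Extend

variable {D' : Dgraph} {z : ℕ} {K : Finset ℕ} {out : Bool}

lemma extend_verts : (D'.extend z K out).verts = insert z D'.verts := rfl

lemma arcs_subset_extend : D'.arcs ⊆ (D'.extend z K out).arcs := by
  intro e he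
  simp only [extend, Finset.mem_union]
  exact Or.inl (Or.inl (Or.inl he))

lemma extend_arc_ne (hz : z ∉ D'.verts) {e : ℕ × ℕ} (he : e ∈ (D'.extend z K out).arcs)
    (h1 : e.1 ≠ z) (h2 : e.2 ≠ z) : e ∈ D'.arcs := by
  simp only [extend, Finset.mem_union] at he
  rcases he with ((h | h) | h) | h
  · exact h
  · obtain ⟨w, _, rfl⟩ := Finset.mem_image.mp h; exact absurd rfl h2
  · obtain ⟨w, _, rfl⟩ := Finset.mem_image.mp h; exact absurd rfl h1
  · cases out with
    | true =>
      simp only [if_true] at h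
      obtain ⟨w, _, rfl⟩ := Finset.mem_image.mp h; exact absurd rfl h1
    | false =>
      simp only [Bool.false_eq_true, if_false] at h
      obtain ⟨w, _, rfl⟩ := Finset.mem_image.mp h; exact absurd rfl h2

lemma extend_arc_K (hz : z ∉ D'.verts) (hK : K ⊆ D'.verts) {w : ℕ} (hw : w ∈ K) :
    (w, z) ∈ (D'.extend z K out).arcs ∧ (z, w) ∈ (D'.extend z K out).arcs := by
  have hwD : w ∈ D'.verts := hK hw
  have hwz : w ≠ z := fun h => hz (h ▸ hwD)
  have hmem : w ∈ (K ∩ D'.verts).filter (· ≠ z) := by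
    simp only [Finset.mem_filter, Finset.mem_inter]
    exact ⟨⟨hw, hwD⟩, hwz⟩
  constructor
  · simp only [extend, Finset.mem_union]
    exact Or.inl (Or.inl (Or.inr (Finset.mem_image.mpr ⟨w, hmem, rfl⟩)))
  · simp only [extend, Finset.mem_union]
    exact Or.inl (Or.inr (Finset.mem_image.mpr ⟨w, hmem, rfl⟩))

lemma extend_in_arc_true (hz : z ∉ D'.verts) {a : ℕ}
    (h : (a, z) ∈ (D'.extend z K true).arcs) : a ∈ K := by
  simp only [extend, if_true, Finset.mem_union] at h
  rcases h with ((h | h) | h) | h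
  · exact absurd (D'.arcs_mem _ h).2 hz
  · obtain ⟨w, hw, hwe⟩ := Finset.mem_image.mp h
    have : w = a := (Prod.mk.injEq _ _ _ _ ▸ hwe).1
    subst this
    exact (Finset.mem_inter.mp (Finset.mem_filter.mp hw).1).1
  · obtain ⟨w, hw, hwe⟩ := Finset.mem_image.mp h
    have hw2 : w = z := (Prod.mk.injEq _ _ _ _ ▸ hwe).2
    exact absurd hw2 (Finset.mem_filter.mp hw).2
  · obtain ⟨w, hw, hwe⟩ := Finset.mem_image.mp h
    have hw2 : w = z := (Prod.mk.injEq _ _ _ _ ▸ hwe).2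
    exact absurd hw2 (Finset.mem_filter.mp hw).2

lemma extend_out_arc_false (hz : z ∉ D'.verts) {b : ℕ}
    (h : (z, b) ∈ (D'.extend z K false).arcs) : b ∈ K := by
  simp only [extend, Bool.false_eq_true, if_false, Finset.mem_union] at h
  rcases h with ((h | h) | h) | h
  · exact absurd (D'.arcs_mem _ h).1 hz
  · obtain ⟨w, hw, hwe⟩ := Finset.mem_image.mp h
    have hw2 : w = z := (Prod.mk.injEq _ _ _ _ ▸ hwe).1
    exact absurd hw2 (Finset.mem_filter.mp hw).2
  · obtain ⟨w, hw, hwe⟩ := Finset.mem_image.mp h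
    have : w = b := (Prod.mk.injEq _ _ _ _ ▸ hwe).2
    subst this
    exact (Finset.mem_inter.mp (Finset.mem_filter.mp hw).1).1
  · obtain ⟨w, hw, hwe⟩ := Finset.mem_image.mp h
    have hw2 : w = z := (Prod.mk.injEq _ _ _ _ ▸ hwe).1
    exact absurd hw2 (Finset.mem_filter.mp hw).2

lemma extend_recip (hz : z ∉ D'.verts) {w : ℕ}
    (h1 : (w, z) ∈ (D'.extend z K out).arcs) (h2 : (z, w) ∈ (D'.extend z K out).arcs) :
    w ∈ K := by
  cases out with
  | true => exact extend_in_arc_true hz h1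
  | false => exact extend_out_arc_false hz h2

end Extend

end Dgraph
namespace Dgraph

section Extend2

variable {D' : Dgraph} {z : ℕ} {K : Finset ℕ} {out : Bool}

lemma recipDeg_extend_new (hz : z ∉ D'.verts) (hK : K ⊆ D'.verts) :
    (D'.extend z K out).recipDeg z = K.card := by
  unfold recipDeg
  congr 1
  apply Finset.ext
  intro w
  simp only [Finset.mem_filter, extend_verts, Finset.mem_insert]
  constructor
  · rintro ⟨hw, h1, h2⟩
    exact extend_recip hz h2 h1
  · intro hw
    have := extend_arc_K (out := out) hz hK hw
    exact ⟨Or.inr (hK hw), this.2, this.1⟩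

lemma recipDeg_extend_old (hz : z ∉ D'.verts) (hK : K ⊆ D'.verts) {v : ℕ}
    (hv : v ∈ D'.verts) :
    (D'.extend z K out).recipDeg v = D'.recipDeg v + if v ∈ K then 1 else 0 := by
  unfold recipDeg
  have hvz : v ≠ z := fun h => hz (h ▸ hv)
  rw [extend_verts, Finset.filter_insert]
  have hfeq : D'.verts.filter
      (fun w => (v, w) ∈ (D'.extend z K out).arcs ∧ (w, v) ∈ (D'.extend z K out).arcs)
      = D'.verts.filter (fun w => (v, w) ∈ D'.arcs ∧ (w, v) ∈ D'.arcs) := by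
    apply Finset.filter_congr
    intro w hw
    have hwz : w ≠ z := fun h => hz (h ▸ hw)
    constructor
    · rintro ⟨h1, h2⟩
      exact ⟨extend_arc_ne hz h1 hvz hwz, extend_arc_ne hz h2 hwz hvz⟩
    · rintro ⟨h1, h2⟩
      exact ⟨arcs_subset_extend h1, arcs_subset_extend h2⟩
  have hzpred : ((v, z) ∈ (D'.extend z K out).arcs ∧ (z, v) ∈ (D'.extend z K out).arcs)
      ↔ v ∈ K := by
    constructor
    · rintro ⟨h1, h2⟩; exact extend_recip hz h1 h2
    · intro h; exact ⟨(extend_arc_K hz hK h).1, (extend_arc_K hz hK h).2⟩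
  by_cases hvK : v ∈ K
  · rw [if_pos (hzpred.mpr hvK), hfeq, if_pos hvK,
      Finset.card_insert_of_notMem (fun h => hz (Finset.filter_subset _ _ h))]
  · rw [if_neg (fun h => hvK (hzpred.mp h)), hfeq, if_neg hvK, add_zero]

lemma extend_card (hz : z ∉ D'.verts) :
    (D'.extend z K out).verts.card = D'.verts.card + 1 := by
  rw [extend_verts, Finset.card_insert_of_notMem hz]

lemma delete_extend_of_mem {S : Finset ℕ} (hz : z ∉ D'.verts) (hzS : z ∈ S) :
    (D'.extend z K out).delete S = D'.delete S := by
  apply ext'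
  · show (insert z D'.verts) \ S = D'.verts \ S
    ext a
    simp only [Finset.mem_sdiff, Finset.mem_insert]
    constructor
    · rintro ⟨(rfl | h), hS⟩
      · exact absurd hzS hS
      · exact ⟨h, hS⟩
    · rintro ⟨h, hS⟩; exact ⟨Or.inr h, hS⟩
  · show Finset.filter _ _ = Finset.filter _ _
    ext e
    simp only [Finset.mem_filter]
    constructor
    · rintro ⟨he, h1, h2⟩
      exact ⟨extend_arc_ne hz he (fun h => h1 (h ▸ hzS)) (fun h => h2 (h ▸ hzS)), h1, h2⟩
    · rintro ⟨he, h1, h2⟩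
      exact ⟨arcs_subset_extend he, h1, h2⟩

end Extend2

lemma delete_erase {D : Dgraph} {S : Finset ℕ} {z : ℕ} (hz : z ∉ D.verts) :
    D.delete S = D.delete (S.erase z) := by
  apply ext'
  · show D.verts \ S = D.verts \ S.erase z
    ext a
    simp only [Finset.mem_sdiff, Finset.mem_erase]
    constructor
    · rintro ⟨h, hS⟩; exact ⟨h, fun hh => hS hh.2⟩
    · rintro ⟨h, hS⟩
      refine ⟨h, fun hh => hS ⟨fun heq => hz (heq ▸ h), hh⟩⟩
  · show Finset.filter _ _ = Finset.filter _ _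
    ext e
    simp only [Finset.mem_filter, Finset.mem_erase]
    constructor
    · rintro ⟨he, h1, h2⟩
      exact ⟨he, fun hh => h1 hh.2, fun hh => h2 hh.2⟩
    · rintro ⟨he, h1, h2⟩
      have he1 := (D.arcs_mem e he).1
      have he2 := (D.arcs_mem e he).2
      exact ⟨he, fun hh => h1 ⟨fun heq => hz (heq ▸ he1), hh⟩,
        fun hh => h2 ⟨fun heq => hz (heq ▸ he2), hh⟩⟩

lemma recipDeg_completeOn {S₀ : Finset ℕ} {u : ℕ} (hu : u ∈ S₀) :
    (completeOn S₀).recipDeg u = S₀.card - 1 := by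
  unfold recipDeg
  have : (completeOn S₀).verts.filter
      (fun w => (u, w) ∈ (completeOn S₀).arcs ∧ (w, u) ∈ (completeOn S₀).arcs)
      = S₀.erase u := by
    ext w
    simp only [completeOn, Finset.mem_filter, Finset.mem_product, Finset.mem_erase]
    constructor
    · rintro ⟨hw, ⟨_, h⟩, _⟩
      exact ⟨fun heq => h (heq ▸ rfl), hw⟩
    · rintro ⟨hne, hw⟩
      exact ⟨hw, ⟨⟨hu, hw⟩, fun h => hne (h.symm)⟩, ⟨⟨hw, hu⟩, hne⟩⟩
  rw [this, Finset.card_erase_of_mem hu]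

lemma dtree_card {m : ℕ} {D : Dgraph} (hD : IsDTree m D) : m ≤ D.verts.card := by
  induction hD with
  | base S h => exact h ▸ le_refl _
  | grow D' hD' v hv K hK hKcard hKcomplete out ih =>
    rw [extend_card hv]; omega

lemma dtree_complete_of_card_le {m : ℕ} {D : Dgraph} (hD : IsDTree m D)
    (h : D.verts.card ≤ m) : D = completeOn D.verts ∧ D.verts.card = m := by
  cases hD with
  | base S hS => exact ⟨rfl, hS⟩
  | grow D' hD' v hv K hK hKcard hKcomplete out =>
    have := dtree_card hD'
    rw [extend_card hv] at h
    omega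

end Dgraph
namespace Dgraph

lemma exists_mem_not_mem' {s t : Finset ℕ} (h : s.card < t.card) : ∃ w ∈ t, w ∉ s := by
  by_contra hc
  push_neg at hc
  exact absurd (Finset.card_le_card hc) (not_le.mpr h)

/-- Lifting strong connectivity through an extension after deletion. -/
lemma extend_delete_strong {D' : Dgraph} {z : ℕ} {K : Finset ℕ} {out : Bool} {S : Finset ℕ}
    (hz : z ∉ D'.verts) (hK : K ⊆ D'.verts) {w₀ : ℕ} (hw : w₀ ∈ K) (hwS : w₀ ∉ S)
    (hzS : z ∉ S) (h' : StronglyConnected (D'.delete S)) :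
    StronglyConnected ((D'.extend z K out).delete S) := by
  set D := D'.extend z K out with hDdef
  have harcs : (D'.delete S).arcs ⊆ (D.delete S).arcs :=
    delete_arcs_mono arcs_subset_extend S
  have hw₀v : w₀ ∈ (D'.delete S).verts := Finset.mem_sdiff.mpr ⟨hK hw, hwS⟩
  have hzw : (z, w₀) ∈ (D.delete S).arcs := by
    simp only [delete, Finset.mem_filter]
    exact ⟨(extend_arc_K hz hK hw).2, hzS, hwS⟩
  have hwz : (w₀, z) ∈ (D.delete S).arcs := by
    simp only [delete, Finset.mem_filter]
    exact ⟨(extend_arc_K hz hK hw).1, hwS, hzS⟩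
  have hreach : ∀ a ∈ (D'.delete S).verts, ∀ b ∈ (D'.delete S).verts, (D.delete S).Reach a b :=
    fun a ha b hb => reach_mono harcs (h' a ha b hb)
  intro u hu v hv
  have hu' : u = z ∨ u ∈ (D'.delete S).verts := by
    have := Finset.mem_sdiff.mp hu
    rcases Finset.mem_insert.mp this.1 with h | h
    · exact Or.inl h
    · exact Or.inr (Finset.mem_sdiff.mpr ⟨h, this.2⟩)
  have hv' : v = z ∨ v ∈ (D'.delete S).verts := by
    have := Finset.mem_sdiff.mp hv
    rcases Finset.mem_insert.mp this.1 with h | h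
    · exact Or.inl h
    · exact Or.inr (Finset.mem_sdiff.mpr ⟨h, this.2⟩)
  rcases hu' with rfl | hu'
  · rcases hv' with rfl | hv'
    · exact Relation.ReflTransGen.refl
    · exact Relation.ReflTransGen.head hzw (hreach w₀ hw₀v v hv')
  · rcases hv' with rfl | hv'
    · exact Relation.ReflTransGen.tail (hreach u hu' w₀ hw₀v) hwz
    · exact hreach u hu' v hv'

/-- Directed m-trees are m-strongly connected. -/
lemma dtree_strong {m : ℕ} {D : Dgraph} (hD : IsDTree m D) :
    ∀ S : Finset ℕ, S.card < m → StronglyConnected (D.delete S) := by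
  induction hD with
  | base S₀ h =>
    intro S hS u hu v hv
    have hu' := Finset.mem_sdiff.mp hu
    have hv' := Finset.mem_sdiff.mp hv
    by_cases huv : u = v
    · exact huv ▸ Relation.ReflTransGen.refl
    · refine Relation.ReflTransGen.single ?_
      simp only [completeOn, delete, Finset.mem_filter, Finset.mem_product] at hu' hv' ⊢
      exact ⟨⟨⟨hu'.1, hv'.1⟩, huv⟩, hu'.2, hv'.2⟩
  | grow D' hD' z hz K hK hKcard hKcomplete out ih =>
    intro S hS
    by_cases hzS : z ∈ S
    · rw [delete_extend_of_mem hz hzS]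
      exact ih S hS
    · obtain ⟨w₀, hw₀K, hw₀S⟩ :=
        exists_mem_not_mem' (hKcard ▸ hS)
      exact extend_delete_strong hz hK hw₀K hw₀S hzS (ih S hS)

lemma reach_eq_of_no_in {D : Dgraph} {z u : ℕ} (h : ∀ a, (a, z) ∉ D.arcs)
    (hr : D.Reach u z) : u = z := by
  rcases (Relation.ReflTransGen.cases_tail hr) with h' | ⟨c, _, hc⟩
  · exact h'.symm
  · exact absurd hc (h c)

lemma reach_eq_of_no_out {D : Dgraph} {z u : ℕ} (h : ∀ a, (z, a) ∉ D.arcs)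
    (hr : D.Reach z u) : u = z := by
  rcases (Relation.ReflTransGen.cases_head hr) with h' | ⟨c, hc, _⟩
  · exact h'.symm
  · exact absurd hc (h c)

/-- `K` is a separator of the extension. -/
lemma extend_K_separator {D' : Dgraph} {z : ℕ} {K : Finset ℕ} {out : Bool}
    (hz : z ∉ D'.verts) (hK : K ⊆ D'.verts) (hcard : K.card < D'.verts.card) :
    IsSeparator (D'.extend z K out) K := by
  have hzK : z ∉ K := fun h => hz (hK h)
  obtain ⟨w₁, hw₁, hw₁K⟩ := exists_mem_not_mem' hcard
  have hzmem : z ∈ ((D'.extend z K out).delete K).verts :=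
    Finset.mem_sdiff.mpr ⟨Finset.mem_insert_self _ _, hzK⟩
  have hw₁mem : w₁ ∈ ((D'.extend z K out).delete K).verts :=
    Finset.mem_sdiff.mpr ⟨Finset.mem_insert_of_mem hw₁, hw₁K⟩
  have hw₁z : w₁ ≠ z := fun h => hz (h ▸ hw₁)
  refine ⟨fun a ha => Finset.mem_insert_of_mem (hK ha), Or.inl ?_⟩
  intro hstrong
  cases out with
  | true =>
    have : w₁ = z := by
      refine reach_eq_of_no_in ?_ (hstrong w₁ hw₁mem z hzmem)
      intro a hmem
      simp only [delete, Finset.mem_filter] at hmem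
      exact hmem.2.1 (extend_in_arc_true hz hmem.1)
    exact hw₁z this
  | false =>
    have : w₁ = z := by
      refine reach_eq_of_no_out ?_ (hstrong z hzmem w₁ hw₁mem)
      intro a hmem
      simp only [delete, Finset.mem_filter] at hmem
      exact hmem.2.2 (extend_out_arc_false hz hmem.1)
    exact hw₁z this

end Dgraph
namespace Dgraph

/-- Every directed m-tree on at least m+1 vertices has, outside any given
bidirectional clique of size at most m, a vertex of reciprocal degree m. -/
lemma dtree_simp {m : ℕ} (hm : 1 ≤ m) {D : Dgraph} (hD : IsDTree m D) :
    ∀ K : Finset ℕ, K ⊆ D.verts → K.card ≤ m →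
      (∀ u ∈ K, ∀ v ∈ K, u ≠ v → (u, v) ∈ D.arcs ∧ (v, u) ∈ D.arcs) →
      m + 1 ≤ D.verts.card → ∃ v ∈ D.verts, v ∉ K ∧ D.recipDeg v = m := by
  induction hD with
  | base S₀ h =>
    intro K _ _ _ hcard
    rw [show (completeOn S₀).verts = S₀ from rfl, h] at hcard
    omega
  | grow D'' hD'' z' hz' Kp hKp hKpcard hKpcomp out ih =>
    intro K hKsub hKcard hKcl hcard
    by_cases hzK : z' ∈ K
    · -- the new vertex lies in K
      have hKsub' : K.erase z' ⊆ Kp := by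
        intro u hu
        have hu' := Finset.mem_erase.mp hu
        have := hKcl u hu'.2 z' hzK hu'.1
        exact extend_recip hz' this.1 this.2
      by_cases hc : m + 1 ≤ D''.verts.card
      · -- recurse with the parent clique
        have hKpcl : ∀ u ∈ Kp, ∀ v ∈ Kp, u ≠ v →
            (u, v) ∈ D''.arcs ∧ (v, u) ∈ D''.arcs := by
          intro u hu v hv huv
          constructor
          · apply hKpcomp.2
            simp only [completeOn, Finset.mem_filter, Finset.mem_product]
            exact ⟨⟨hu, hv⟩, huv⟩
          · apply hKpcomp.2
            simp only [completeOn, Finset.mem_filter, Finset.mem_product]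
            exact ⟨⟨hv, hu⟩, fun h => huv h.symm⟩
        obtain ⟨v, hv, hvKp, hvdeg⟩ := ih Kp hKp (le_of_eq hKpcard) hKpcl hc
        refine ⟨v, Finset.mem_insert_of_mem hv, ?_, ?_⟩
        · intro hvK
          have hvz : v ≠ z' := fun h => hz' (h ▸ hv)
          exact hvKp (hKsub' (Finset.mem_erase.mpr ⟨hvz, hvK⟩))
        · rw [recipDeg_extend_old hz' hKp hv, if_neg hvKp, add_zero]
          exact hvdeg
      · -- D'' is just the base clique
        push_neg at hc
        obtain ⟨hDeq, hDcard⟩ := dtree_complete_of_card_le hD'' (by omega)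
        have hKpeq : Kp = D''.verts :=
          Finset.eq_of_subset_of_card_le hKp (by omega)
        have hlt : (K.erase z').card < D''.verts.card := by
          have h1 : (K.erase z').card = K.card - 1 := Finset.card_erase_of_mem hzK
          have h2 : 1 ≤ K.card := Finset.card_pos.mpr ⟨z', hzK⟩
          omega
        obtain ⟨v, hv, hvK'⟩ := exists_mem_not_mem' hlt
        have hvz : v ≠ z' := fun h => hz' (h ▸ hv)
        have hvK : v ∉ K := fun h => hvK' (Finset.mem_erase.mpr ⟨hvz, h⟩)
        refine ⟨v, Finset.mem_insert_of_mem hv, hvK, ?_⟩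
        rw [recipDeg_extend_old hz' hKp hv, if_pos (hKpeq ▸ hv)]
        have : D''.recipDeg v = D''.verts.card - 1 := by
          conv_lhs => rw [hDeq]
          exact recipDeg_completeOn hv
        omega
    · -- the new vertex is outside K: it is simplicial of degree m
      refine ⟨z', Finset.mem_insert_self _ _, hzK, ?_⟩
      rw [recipDeg_extend_new hz' hKp, hKpcard]

end Dgraph
namespace Dgraph

lemma induce_delete_extend {D' : Dgraph} {z : ℕ} {K : Finset ℕ} {out : Bool} {S : Finset ℕ}
    (hz : z ∉ D'.verts) {C : Finset ℕ} (hC : C ⊆ D'.verts) :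
    ((D'.extend z K out).delete S).induce C = (D'.delete S).induce C := by
  apply ext'
  · show ((insert z D'.verts) \ S) ∩ C = (D'.verts \ S) ∩ C
    ext a
    simp only [Finset.mem_inter, Finset.mem_sdiff, Finset.mem_insert]
    constructor
    · rintro ⟨⟨rfl | h, hS⟩, hc⟩
      · exact absurd (hC hc) hz
      · exact ⟨⟨h, hS⟩, hc⟩
    · rintro ⟨⟨h, hS⟩, hc⟩
      exact ⟨⟨Or.inr h, hS⟩, hc⟩
  · show Finset.filter _ (Finset.filter _ _) = Finset.filter _ (Finset.filter _ _)
    ext e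
    simp only [Finset.mem_filter]
    constructor
    · rintro ⟨⟨he, hS1, hS2⟩, hc1, hc2⟩
      have h1 : e.1 ≠ z := fun h => hz (h ▸ hC hc1)
      have h2 : e.2 ≠ z := fun h => hz (h ▸ hC hc2)
      exact ⟨⟨extend_arc_ne hz he h1 h2, hS1, hS2⟩, hc1, hc2⟩
    · rintro ⟨⟨he, hS1, hS2⟩, hc1, hc2⟩
      exact ⟨⟨arcs_subset_extend he, hS1, hS2⟩, hc1, hc2⟩

/-- Main lemma: the conclusion of the theorem, by induction on the m-tree
structure. -/
lemma dtree_main {m : ℕ} (hm : 1 ≤ m) {D : Dgraph} (hD : IsDTree m D) :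
    m + 2 ≤ D.verts.card → ∀ S : Finset ℕ, D.IsMinSeparator S →
      ∀ B : Finset ℕ, (D.delete S).IsStrongComponent B →
        ∃ v ∈ B, D.recipDeg v = m := by
  induction hD with
  | base S₀ h =>
    intro hcard
    rw [show (completeOn S₀).verts = S₀ from rfl, h] at hcard
    omega
  | grow D' hD' z hz K hK hKcard hKcomp out ih =>
    intro hcard S hS B hB
    have hDcard : (D'.extend z K out).verts.card = D'.verts.card + 1 := extend_card hz
    have hD'card : m + 1 ≤ D'.verts.card := by omega
    obtain ⟨⟨hSsub, hSsep⟩, hSmin⟩ := hS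
    obtain ⟨hBsub, hBne, hBstrong, hBmax⟩ := hB
    -- |S| ≤ m via the separator K
    have hSleK : S.card ≤ m := by
      have := hSmin K (extend_K_separator hz hK (by omega))
      omega
    -- the deleted graph has at least 2 vertices
    have hGcard : 2 ≤ ((D'.extend z K out).delete S).verts.card := by
      show 2 ≤ ((D'.extend z K out).verts \ S).card
      have h1 : (D'.extend z K out).verts.card ≤
          ((D'.extend z K out).verts \ S).card + S.card :=
        Finset.card_le_card_sdiff_add_card
      omega
    -- hence D - S is not strongly connected
    have hGns : ¬ StronglyConnected ((D'.extend z K out).delete S) := by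
      rcases hSsep with h | h
      · exact h
      · omega
    -- |S| = m
    have hScard : S.card = m := by
      by_contra hne
      exact hGns (dtree_strong (IsDTree.grow D' hD' z hz K hK hKcard hKcomp out) S (by omega))
    -- z ∉ S
    have hzS : z ∉ S := by
      intro hzS
      apply hGns
      rw [delete_extend_of_mem hz hzS, delete_erase hz]
      have : (S.erase z).card < m := by
        rw [Finset.card_erase_of_mem hzS]
        have : 1 ≤ S.card := Finset.card_pos.mpr ⟨z, hzS⟩
        omega
      exact dtree_strong hD' _ this
    have hzG : z ∈ ((D'.extend z K out).delete S).verts :=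
      Finset.mem_sdiff.mpr ⟨Finset.mem_insert_self _ _, hzS⟩
    have hSsubD' : S ⊆ D'.verts := by
      intro a ha
      rcases Finset.mem_insert.mp (hSsub ha) with rfl | h
      · exact absurd ha hzS
      · exact h
    by_cases hzB : z ∈ B
    · -- the new vertex itself works
      exact ⟨z, hzB, by rw [recipDeg_extend_new hz hK, hKcard]⟩
    · -- z ∉ B: first, B avoids K
      have hKB : ∀ v ∈ B, v ∉ K := by
        intro v hvB hvK
        have hvG := hBsub hvB
        have hvS : v ∉ S := (Finset.mem_sdiff.mp hvG).2
        have hzv : (z, v) ∈ ((D'.extend z K out).delete S).arcs := by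
          simp only [delete, Finset.mem_filter]
          exact ⟨(extend_arc_K hz hK hvK).2, hzS, hvS⟩
        have hvz : (v, z) ∈ ((D'.extend z K out).delete S).arcs := by
          simp only [delete, Finset.mem_filter]
          exact ⟨(extend_arc_K hz hK hvK).1, hvS, hzS⟩
        -- insert z B induces a strongly connected subdigraph
        have hlift : ∀ a ∈ B, ∀ b ∈ B,
            (((D'.extend z K out).delete S).induce (insert z B)).Reach a b := by
          intro a ha b hb
          refine reach_mono (induce_arcs_mono _ (Finset.subset_insert _ _)) ?_
          exact hBstrong a (Finset.mem_inter.mpr ⟨hBsub ha, ha⟩)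
            b (Finset.mem_inter.mpr ⟨hBsub hb, hb⟩)
        have harc1 : (z, v) ∈ (((D'.extend z K out).delete S).induce (insert z B)).arcs := by
          simp only [induce, Finset.mem_filter]
          exact ⟨hzv, Finset.mem_insert_self _ _, Finset.mem_insert_of_mem hvB⟩
        have harc2 : (v, z) ∈ (((D'.extend z K out).delete S).induce (insert z B)).arcs := by
          simp only [induce, Finset.mem_filter]
          exact ⟨hvz, Finset.mem_insert_of_mem hvB, Finset.mem_insert_self _ _⟩
        have hstr : StronglyConnected
            (((D'.extend z K out).delete S).induce (insert z B)) := by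
          intro a ha b hb
          have ha' := (Finset.mem_inter.mp ha).2
          have hb' := (Finset.mem_inter.mp hb).2
          rcases Finset.mem_insert.mp ha' with rfl | haB
          · rcases Finset.mem_insert.mp hb' with rfl | hbB
            · exact Relation.ReflTransGen.refl
            · exact Relation.ReflTransGen.head harc1 (hlift v hvB b hbB)
          · rcases Finset.mem_insert.mp hb' with rfl | hbB
            · exact Relation.ReflTransGen.tail (hlift a haB v hvB) harc2
            · exact hlift a haB b hbB
        have := hBmax (insert z B) (Finset.subset_insert _ _)
          (Finset.insert_subset hzG hBsub) hstr
        exact hzB (this ▸ Finset.mem_insert_self z B)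
      -- B lives in D' - S
      have hBsubH : B ⊆ (D'.delete S).verts := by
        intro a ha
        have h1 := Finset.mem_sdiff.mp (hBsub ha)
        rcases Finset.mem_insert.mp h1.1 with rfl | h
        · exact absurd ha hzB
        · exact Finset.mem_sdiff.mpr ⟨h, h1.2⟩
      have hHsubG : (D'.delete S).verts ⊆ ((D'.extend z K out).delete S).verts := by
        intro a ha
        have h1 := Finset.mem_sdiff.mp ha
        exact Finset.mem_sdiff.mpr ⟨Finset.mem_insert_of_mem h1.1, h1.2⟩
      by_cases hH : StronglyConnected (D'.delete S)
      · -- Case B : D' - S strongly connected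
        by_cases hKS : ∃ w₀ ∈ K, w₀ ∉ S
        · obtain ⟨w₀, hw₀K, hw₀S⟩ := hKS
          exact absurd (extend_delete_strong hz hK hw₀K hw₀S hzS hH) hGns
        · push_neg at hKS
          have hKeqS : K = S := Finset.eq_of_subset_of_card_le hKS (by omega)
          -- B is exactly the vertex set of D' - S
          have hind : StronglyConnected
              (((D'.extend z K out).delete S).induce (D'.delete S).verts) := by
            intro a ha b hb
            have ha' := (Finset.mem_inter.mp ha).2
            have hb' := (Finset.mem_inter.mp hb).2
            refine reach_mono ?_ (hH a ha' b hb')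
            intro e he
            simp only [induce, Finset.mem_filter]
            have hmem := (D'.delete S).arcs_mem e he
            exact ⟨delete_arcs_mono arcs_subset_extend S he, hmem.1, hmem.2⟩
          have hBeq := hBmax (D'.delete S).verts hBsubH hHsubG hind
          -- find a simplicial vertex of D' outside the clique K = S
          have hKcl : ∀ u ∈ K, ∀ v ∈ K, u ≠ v → (u, v) ∈ D'.arcs ∧ (v, u) ∈ D'.arcs := by
            intro u hu v hv huv
            constructor
            · apply hKcomp.2
              simp only [completeOn, Finset.mem_filter, Finset.mem_product]
              exact ⟨⟨hu, hv⟩, huv⟩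
            · apply hKcomp.2
              simp only [completeOn, Finset.mem_filter, Finset.mem_product]
              exact ⟨⟨hv, hu⟩, fun h => huv h.symm⟩
          obtain ⟨v, hvD', hvK, hvdeg⟩ :=
            dtree_simp hm hD' K hK (le_of_eq hKcard) hKcl hD'card
          refine ⟨v, ?_, ?_⟩
          · rw [← hBeq]
            exact Finset.mem_sdiff.mpr ⟨hvD', hKeqS ▸ hvK⟩
          · rw [recipDeg_extend_old hz hK hvD', if_neg hvK, add_zero]
            exact hvdeg
      · -- Case A : D' - S not strongly connected; use the induction hypothesis
        have hHcard : 2 ≤ (D'.delete S).verts.card := by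
          by_contra hc
          exact hH (strong_of_card_le_one (by omega))
        have hD'big : m + 2 ≤ D'.verts.card := by
          have h1 : ((D'.verts) \ S).card + S.card = D'.verts.card :=
            Finset.card_sdiff_add_card_eq_card hSsubD'
          have h2 : (D'.delete S).verts.card = (D'.verts \ S).card := rfl
          omega
        have hSsep' : D'.IsMinSeparator S := by
          refine ⟨⟨hSsubD', Or.inl hH⟩, ?_⟩
          intro T hT
          rcases hT.2 with hns | hsmall
          · by_contra hlt
            exact hns (dtree_strong hD' T (by omega))
          · have h1 : D'.verts.card ≤ (D'.verts \ T).card + T.card :=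
              Finset.card_le_card_sdiff_add_card
            have h2 : (D'.delete T).verts.card = (D'.verts \ T).card := rfl
            omega
        have hBcomp : (D'.delete S).IsStrongComponent B := by
          refine ⟨hBsubH, hBne, ?_, ?_⟩
          · rw [← induce_delete_extend hz (hBsubH.trans (Finset.sdiff_subset))]
            exact hBstrong
          · intro B' hBB' hB'sub hB'str
            refine hBmax B' hBB' (hB'sub.trans hHsubG) ?_
            rw [induce_delete_extend hz (hB'sub.trans (Finset.sdiff_subset))]
            exact hB'str
        obtain ⟨v, hvB, hvdeg⟩ := ih hD'big S hSsep' B hBcomp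
        have hvD' : v ∈ D'.verts := (Finset.mem_sdiff.mp (hBsubH hvB)).1
        refine ⟨v, hvB, ?_⟩
        rw [recipDeg_extend_old hz hK hvD', if_neg (hKB v hvB), add_zero]
        exact hvdeg

end Dgraph
open Dgraph
/-- Let `D` be a directed `(k-1)`-tree on `n ≥ k+1` vertices and `S` a minimum
separator. Then every strong component of `D - S` contains a vertex of
reciprocal-degree exactly `k-1` in `D`. -/
theorem stmt8 (k n : ℕ) (hk : 2 ≤ k) (hn : k + 1 ≤ n)
    (D : Dgraph) (hD : Dgraph.IsDTree (k - 1) D) (hcard : D.verts.card = n)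
    (S : Finset ℕ) (hS : D.IsMinSeparator S) :
    ∀ B : Finset ℕ, (D.delete S).IsStrongComponent B →
      ∃ v ∈ B, D.recipDeg v = k - 1 := by
  have hm : 1 ≤ k - 1 := by omega
  exact dtree_main hm hD (by omega) S hS
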